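/- arXiv:2605.13772 — 3 statements merged into one kernel-verified Lean document; each statement's English description precedes it below -/
import Mathlib

section
/- Let m ≥ 1 and 1 ≤ τ ≤ m be integers, and let S(1),…,S(m) and Ŝ(1),…,Ŝ(m) be real-valued random variables on a probability space. Suppose there are constants μ_c ∈ ℝ, c, ν, b, γ > 0 and α, β ∈ [0,1] such that: (i) for every t < τ and every u > 0, P(S(t) − μ_c ≥ u) ≤ exp(−c·min(u²/ν², u/b)); (ii) P(S(τ) ≥ μ_c + γ) ≥ 1 − β; (iii) P(max_{t ≤ τ} |Ŝ(t) − S(t)| ≤ γ/4) ≥ 1 − α. Set θ = μ_c + γ/2 and define the first-crossing estimator τ̂ = min{t : Ŝ(t) ≥ θ} (with τ̂ undefined/infinite if no t ≤ m crosses). Then P(τ̂ = τ) ≥ 1 − α − β − (τ−1)·exp(−c·min(γ²/(16ν²), γ/(4b))). -/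
open MeasureTheory ProbabilityTheory

/-- first-error localization under a transport margin.  Assume
(i) a sub-exponential tail bound for the scores of correct steps `t < τ`,
(ii) the margin event `P(S(τ) ≥ μ_c + γ) ≥ 1 − β`, and
(iii) the estimation event `P(max_{t ≤ τ} |Ŝ(t) − S(t)| ≤ γ/4) ≥ 1 − α`.
With threshold `θ = μ_c + γ/2` and first-crossing estimator
`τ̂ = min{t : 1 ≤ t ≤ m, Ŝ(t) ≥ θ}` (here `sInf`, whose value on the empty set is the
designated "no crossing" value `0 ≠ τ`),
`P(τ̂ = τ) ≥ 1 − α − β − (τ−1) exp(−c min(γ²/(16ν²), γ/(4b)))`. -/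
theorem first_error_localization
    {Ω : Type*} [MeasureSpace Ω] [IsProbabilityMeasure (ℙ : Measure Ω)]
    (m τ : ℕ) (hm : 1 ≤ m) (hτ1 : 1 ≤ τ) (hτm : τ ≤ m)
    (S Shat : ℕ → Ω → ℝ)
    (hS : ∀ t, Measurable (S t)) (hShat : ∀ t, Measurable (Shat t))
    (μc c ν b γ α β : ℝ)
    (hc : 0 < c) (hν : 0 < ν) (hb : 0 < b) (hγ : 0 < γ)
    (hα0 : 0 ≤ α) (hα1 : α ≤ 1) (hβ0 : 0 ≤ β) (hβ1 : β ≤ 1)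
    (htail : ∀ t, 1 ≤ t → t < τ → ∀ u : ℝ, 0 < u →
        ℙ {ω | S t ω - μc ≥ u}
          ≤ ENNReal.ofReal (Real.exp (-(c * min (u ^ 2 / ν ^ 2) (u / b)))))
    (hmargin : ℙ {ω | S τ ω ≥ μc + γ} ≥ ENNReal.ofReal (1 - β))
    (hest : ℙ {ω | ∀ t, 1 ≤ t → t ≤ τ → |Shat t ω - S t ω| ≤ γ / 4}
        ≥ ENNReal.ofReal (1 - α)) :
    ℙ {ω | sInf {t : ℕ | 1 ≤ t ∧ t ≤ m ∧ Shat t ω ≥ μc + γ / 2} = τ}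
      ≥ ENNReal.ofReal (1 - α - β
          - (τ - 1 : ℕ) * Real.exp (-(c * min (γ ^ 2 / (16 * ν ^ 2)) (γ / (4 * b))))) := by
  set ε : ℝ := Real.exp (-(c * min (γ ^ 2 / (16 * ν ^ 2)) (γ / (4 * b)))) with hε
  have hεpos : 0 < ε := Real.exp_pos _
  -- Bad events
  set M : Set Ω := {ω | S τ ω ≥ μc + γ} with hM
  set E : Set Ω := {ω | ∀ t, 1 ≤ t → t ≤ τ → |Shat t ω - S t ω| ≤ γ / 4} with hE
  set B : ℕ → Set Ω := fun t => {ω | S t ω - μc ≥ γ / 4} with hB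
  have hMmeas : MeasurableSet M := measurableSet_le measurable_const (hS τ)
  have hEmeas : MeasurableSet E := by
    have : E = ⋂ (t : ℕ), ⋂ (_ : 1 ≤ t), ⋂ (_ : t ≤ τ),
        {ω | |Shat t ω - S t ω| ≤ γ / 4} := by
      ext ω; simp [hE, Set.mem_iInter]
    rw [this]
    exact MeasurableSet.iInter fun t => MeasurableSet.iInter fun _ =>
      MeasurableSet.iInter fun _ =>
        measurableSet_le ((hShat t).sub (hS t)).abs measurable_const
  have hBmeas : ∀ t, MeasurableSet (B t) :=
    fun t => measurableSet_le measurable_const ((hS t).sub measurable_const)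
  set A : Set Ω := Mᶜ ∪ Eᶜ ∪ ⋃ t ∈ Finset.Ico 1 τ, B t with hA
  have hAmeas : MeasurableSet A :=
    ((hMmeas.compl.union hEmeas.compl).union
      (Finset.measurableSet_biUnion _ fun t _ => hBmeas t))
  -- Good event is contained in the target
  have hsub : Aᶜ ⊆ {ω | sInf {t : ℕ | 1 ≤ t ∧ t ≤ m ∧ Shat t ω ≥ μc + γ / 2} = τ} := by
    intro ω hω
    simp only [hA, Set.compl_union, compl_compl, Set.mem_inter_iff, Set.mem_compl_iff,
      Set.mem_iUnion, not_exists] at hω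
    obtain ⟨⟨hωM, hωE⟩, hωB⟩ := hω
    have hτin : τ ∈ {t : ℕ | 1 ≤ t ∧ t ≤ m ∧ Shat t ω ≥ μc + γ / 2} := by
      refine ⟨hτ1, hτm, ?_⟩
      have h1 : |Shat τ ω - S τ ω| ≤ γ / 4 := hωE τ hτ1 le_rfl
      have h2 : S τ ω ≥ μc + γ := hωM
      have := abs_le.mp h1
      linarith [this.1]
    have hnot : ∀ t < τ, t ∉ {t : ℕ | 1 ≤ t ∧ t ≤ m ∧ Shat t ω ≥ μc + γ / 2} := by
      intro t htτ ht
      obtain ⟨ht1, _, ht3⟩ := ht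
      have hb1 : ¬ (S t ω - μc ≥ γ / 4) := hωB t (Finset.mem_Ico.mpr ⟨ht1, htτ⟩)
      have h1 : |Shat t ω - S t ω| ≤ γ / 4 := hωE t ht1 htτ.le
      have := abs_le.mp h1
      push_neg at hb1
      linarith [this.2]
    have hle : sInf {t : ℕ | 1 ≤ t ∧ t ≤ m ∧ Shat t ω ≥ μc + γ / 2} ≤ τ :=
      Nat.sInf_le hτin
    have hmem := Nat.sInf_mem ⟨τ, hτin⟩
    rcases lt_or_eq_of_le hle with h | h
    · exact absurd hmem (hnot _ h)
    · exact h
  -- Probability of bad events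
  have hcompl_le : ∀ (s : Set Ω) (x : ℝ), MeasurableSet s → 0 ≤ x → x ≤ 1 →
      ENNReal.ofReal (1 - x) ≤ ℙ s → ℙ sᶜ ≤ ENNReal.ofReal x := by
    intro s x hs hx0 hx1 hps
    rw [prob_compl_eq_one_sub hs]
    refine tsub_le_iff_right.mpr ?_
    calc (1 : ENNReal) = ENNReal.ofReal (x + (1 - x)) := by
            rw [show x + (1 - x) = 1 by ring]; simp
      _ = ENNReal.ofReal x + ENNReal.ofReal (1 - x) :=
            ENNReal.ofReal_add hx0 (by linarith)
      _ ≤ ENNReal.ofReal x + ℙ s := by gcongr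
  have hMc : ℙ Mᶜ ≤ ENNReal.ofReal β := hcompl_le M β hMmeas hβ0 hβ1 hmargin
  have hEc : ℙ Eᶜ ≤ ENNReal.ofReal α := hcompl_le E α hEmeas hα0 hα1 hest
  have hBt : ∀ t ∈ Finset.Ico 1 τ, ℙ (B t) ≤ ENNReal.ofReal ε := by
    intro t ht
    rw [Finset.mem_Ico] at ht
    have := htail t ht.1 ht.2 (γ / 4) (by positivity)
    have heq : (γ / 4) ^ 2 / ν ^ 2 = γ ^ 2 / (16 * ν ^ 2) := by ring
    have heq2 : (γ / 4) / b = γ / (4 * b) := by ring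
    rw [heq, heq2] at this
    exact this
  have hAbound : ℙ A ≤ ENNReal.ofReal α + ENNReal.ofReal β
      + (τ - 1 : ℕ) * ENNReal.ofReal ε := by
    calc ℙ A ≤ ℙ (Mᶜ ∪ Eᶜ) + ℙ (⋃ t ∈ Finset.Ico 1 τ, B t) := measure_union_le _ _
      _ ≤ (ℙ Mᶜ + ℙ Eᶜ) + ∑ t ∈ Finset.Ico 1 τ, ℙ (B t) := by
          gcongr
          · exact measure_union_le _ _
          · exact measure_biUnion_finset_le _ _
      _ ≤ (ENNReal.ofReal β + ENNReal.ofReal α)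
            + ∑ _t ∈ Finset.Ico 1 τ, ENNReal.ofReal ε := by
          exact add_le_add (add_le_add hMc hEc) (Finset.sum_le_sum hBt)
      _ = ENNReal.ofReal α + ENNReal.ofReal β + (τ - 1 : ℕ) * ENNReal.ofReal ε := by
          rw [Finset.sum_const, Nat.card_Ico, nsmul_eq_mul]
          ring
  -- Put it together
  set x : ℝ := 1 - α - β - (τ - 1 : ℕ) * ε with hx
  rcases le_or_gt x 0 with hx0 | hx0
  · simp [ENNReal.ofReal_eq_zero.mpr hx0]
  have hfinal : ENNReal.ofReal x ≤ 1 - ℙ A := by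
    refine ENNReal.le_sub_of_add_le_right (measure_ne_top _ _) ?_
    calc ENNReal.ofReal x + ℙ A
        ≤ ENNReal.ofReal x + (ENNReal.ofReal α + ENNReal.ofReal β
            + (τ - 1 : ℕ) * ENNReal.ofReal ε) := by gcongr
      _ = ENNReal.ofReal x + (ENNReal.ofReal α + ENNReal.ofReal β
            + ENNReal.ofReal ((τ - 1 : ℕ) * ε)) := by
          rw [ENNReal.ofReal_mul (Nat.cast_nonneg _), ENNReal.ofReal_natCast]
      _ = ENNReal.ofReal (x + (α + β + (τ - 1 : ℕ) * ε)) := by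
          rw [ENNReal.ofReal_add (le_of_lt hx0) (by positivity),
            ENNReal.ofReal_add (by positivity : (0:ℝ) ≤ α + β) (by positivity),
            ENNReal.ofReal_add hα0 hβ0]
      _ = ENNReal.ofReal 1 := by rw [show x + (α + β + (τ - 1 : ℕ) * ε) = 1 by rw [hx]; ring]
      _ = 1 := ENNReal.ofReal_one
  calc ENNReal.ofReal x ≤ 1 - ℙ A := hfinal
    _ = ℙ Aᶜ := (prob_compl_eq_one_sub hAmeas).symm
    _ ≤ ℙ {ω | sInf {t : ℕ | 1 ≤ t ∧ t ≤ m ∧ Shat t ω ≥ μc + γ / 2} = τ} :=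
        measure_mono hsub
end

section
/- Let m ≥ 1, θ ∈ ℝ, ε > 0, and let s_T(1),…,s_T(m) and s_S(1),…,s_S(m) be real-valued random variables on a probability space. Define the random teacher margin m_T = min_{1 ≤ t ≤ m} |s_T(t) − θ|, and the first-crossing indices τ̂_T = min{t : s_T(t) ≥ θ} and τ̂_S = min{t : s_S(t) ≥ θ} (each taken to be a designated 'no crossing' value, e.g. ∞, if no step crosses). Then P(τ̂_S ≠ τ̂_T) ≤ P(m_T ≤ ε) + P(max_{1 ≤ t ≤ m} |s_S(t) − s_T(t)| > ε). -/
open MeasureTheory ProbabilityTheory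

/-- teacher–student decision preservation, probabilistic form.  With
first-crossing indices `τ̂_T(ω) = min{t : 1 ≤ t ≤ m, s_T(t)(ω) ≥ θ}` and
`τ̂_S(ω) = min{t : 1 ≤ t ≤ m, s_S(t)(ω) ≥ θ}` (here `sInf`, whose value on the empty
set is the common designated "no crossing" value `0`), and random teacher margin
`m_T = min_{1 ≤ t ≤ m} |s_T(t) − θ|`,
`P(τ̂_S ≠ τ̂_T) ≤ P(m_T ≤ ε) + P(max_{1 ≤ t ≤ m} |s_S(t) − s_T(t)| > ε)`
(the events `{m_T ≤ ε}` and `{max_t |s_S(t) − s_T(t)| > ε}` being expressed as the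
existence of some step `1 ≤ t ≤ m` realizing them). -/
theorem teacher_student_first_error_bound
    {Ω : Type*} [MeasureSpace Ω] [IsProbabilityMeasure (ℙ : Measure Ω)]
    (m : ℕ) (hm : 1 ≤ m) (θ ε : ℝ) (hε : 0 < ε)
    (sT sS : ℕ → Ω → ℝ)
    (hsT : ∀ t, Measurable (sT t)) (hsS : ∀ t, Measurable (sS t)) :
    ℙ {ω | sInf {t : ℕ | 1 ≤ t ∧ t ≤ m ∧ sS t ω ≥ θ}
            ≠ sInf {t : ℕ | 1 ≤ t ∧ t ≤ m ∧ sT t ω ≥ θ}}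
      ≤ ℙ {ω | ∃ t, 1 ≤ t ∧ t ≤ m ∧ |sT t ω - θ| ≤ ε}
        + ℙ {ω | ∃ t, 1 ≤ t ∧ t ≤ m ∧ ε < |sS t ω - sT t ω|} := by
  refine le_trans (measure_mono ?_) (measure_union_le _ _)
  intro ω hω
  by_contra hc
  simp only [Set.mem_union, Set.mem_setOf_eq, not_or, not_exists, not_and, not_le, not_lt] at hc
  obtain ⟨h1, h2⟩ := hc
  apply hω
  have : {t : ℕ | 1 ≤ t ∧ t ≤ m ∧ sS t ω ≥ θ} = {t : ℕ | 1 ≤ t ∧ t ≤ m ∧ sT t ω ≥ θ} := by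
    ext t
    simp only [Set.mem_setOf_eq]
    constructor
    · rintro ⟨ht1, ht2, hts⟩
      refine ⟨ht1, ht2, ?_⟩
      have hm1 := h1 t ht1 ht2
      have hm2 := h2 t ht1 ht2
      by_contra h
      push_neg at h
      have h3 : sS t ω - sT t ω ≤ ε := le_trans (le_abs_self _) hm2
      cases abs_cases (sT t ω - θ) with
      | inl hcase => linarith [hcase.1, hm1]
      | inr hcase => linarith [hcase.1, hm1]
    · rintro ⟨ht1, ht2, hts⟩
      refine ⟨ht1, ht2, ?_⟩
      have hm1 := h1 t ht1 ht2
      have hm2 := h2 t ht1 ht2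
      have h3 : -(ε) ≤ sS t ω - sT t ω := le_trans (neg_le_neg hm2) (neg_abs_le _)
      cases abs_cases (sT t ω - θ) with
      | inl hcase => linarith [hcase.1, hm1]
      | inr hcase => linarith [hcase.1, hm1]
  rw [this]
end

section
/- Let X₀ ∼ P₀ and X₁ ∼ P₁ be random vectors in ℝ^d with finite second moments, means μ₀, μ₁ and covariances C₀, C₁, and let Y₀, Y₀′ ∼ P₀ be independent copies also independent of X₀, X₁. For U ∈ ℝ^{d×k} with UᵀU = I_k define Γ(U) = E[‖Uᵀ(X₁−Y₀)‖₂²] − E[‖Uᵀ(X₀−Y₀′)‖₂²], and let M = (μ₁−μ₀)(μ₁−μ₀)ᵀ + C₁ − C₀ with eigenvalues λ₁(M) ≥ ⋯ ≥ λ_d(M). Then the maximum of Γ(U) over all semi-orthogonal U ∈ ℝ^{d×k} equals λ₁(M) + ⋯ + λ_k(M), and it is attained exactly when the column space of U is a top-k eigenspace of M (in particular by any U whose columns are orthonormal eigenvectors of M for the k largest eigenvalues). -/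
/-!
Expanding the squares, independence of `Y₀` and `Y₀'` from `(X₀, X₁)` gives
`E‖Uᵀ(X₁ - Y₀)‖² = tr Uᵀ(C₁ + C₀ + (μ₁ - μ₀)(μ₁ - μ₀)ᵀ)U` and `E‖Uᵀ(X₀ - Y₀')‖² = tr Uᵀ(2 C₀)U`,
so `Γ(U) = tr(UᵀMU)` and the theorem is Ky Fan's maximum principle for `M = V diag(ev) Vᵀ`.
With `sᵢ = ‖Uᵀvᵢ‖²` for the columns `vᵢ` of `V`, `tr(UᵀMU) = ∑ evᵢ sᵢ`, where `0 ≤ sᵢ ≤ 1` by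
Bessel's inequality and `∑ sᵢ = k`; such a weighted sum is at most the sum of the `k` largest
`evᵢ` (bathtub principle). At equality `sᵢ = 1` whenever `evᵢ > ev_k` and `sᵢ = 0` whenever
`evᵢ < ev_k`: those eigenvectors lie in, resp. are orthogonal to, the column span of `U`, and
extending the former to an orthonormal basis of the span yields eigenvectors for the top `k`
eigenvalues. Conversely `tr(UᵀMU)` only depends on `UUᵀ`, i.e. on the column span.
-/

open MeasureTheory ProbabilityTheory Matrix

open Finset

namespace ContrastivePCA

section Bathtub

variable {ι : Type*} [DecidableEq ι] {T : Finset ι} {ev s : ι → ℝ} {c : ℝ}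

theorem bathtub_term_nonneg (hT : ∀ i ∈ T, c ≤ ev i) (hTc : ∀ i ∉ T, ev i ≤ c)
    (hs0 : ∀ i, 0 ≤ s i) (hs1 : ∀ i, s i ≤ 1) (i : ι) :
    0 ≤ ((if i ∈ T then 1 else 0) - s i) * (ev i - c) := by
  split_ifs with hi
  · exact mul_nonneg (by linarith [hs1 i]) (by linarith [hT i hi])
  · exact mul_nonneg_of_nonpos_of_nonpos (by linarith [hs0 i]) (by linarith [hTc i hi])

variable [Fintype ι]

theorem sum_sub_sum_mul_eq_sum_mul_sub (c : ℝ) (hs : ∑ i, s i = #T) :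
    ∑ i ∈ T, ev i - ∑ i, ev i * s i = ∑ i, ((if i ∈ T then 1 else 0) - s i) * (ev i - c) := by
  have hT : ∑ i, (if i ∈ T then 1 else 0) * (ev i - c) = ∑ i ∈ T, ev i - #T * c := by
    simp [ite_mul, sum_ite_mem, sum_sub_distrib]
  have hs' : ∑ i, s i * (ev i - c) = ∑ i, ev i * s i - #T * c := by
    simp only [mul_sub, sum_sub_distrib, ← sum_mul, hs, mul_comm (s _) (ev _)]
  simp only [sub_mul, sum_sub_distrib, hT, hs']
  ring

theorem sum_mul_le_sum_of_le_one (hT : ∀ i ∈ T, c ≤ ev i) (hTc : ∀ i ∉ T, ev i ≤ c)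
    (hs0 : ∀ i, 0 ≤ s i) (hs1 : ∀ i, s i ≤ 1) (hs : ∑ i, s i = #T) :
    ∑ i, ev i * s i ≤ ∑ i ∈ T, ev i := by
  have := sum_sub_sum_mul_eq_sum_mul_sub (ev := ev) c hs
  linarith [sum_nonneg fun i (_ : i ∈ univ) => bathtub_term_nonneg hT hTc hs0 hs1 i]

theorem eq_one_and_eq_zero_of_sum_mul_eq (hT : ∀ i ∈ T, c ≤ ev i) (hTc : ∀ i ∉ T, ev i ≤ c)
    (hs0 : ∀ i, 0 ≤ s i) (hs1 : ∀ i, s i ≤ 1) (hs : ∑ i, s i = #T)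
    (heq : ∑ i, ev i * s i = ∑ i ∈ T, ev i) :
    (∀ i, c < ev i → s i = 1) ∧ (∀ i, ev i < c → s i = 0) := by
  have hzero : ∀ i, ((if i ∈ T then 1 else 0) - s i) * (ev i - c) = 0 := by
    have hsum := sum_sub_sum_mul_eq_sum_mul_sub (ev := ev) c hs
    rw [heq, sub_self, eq_comm,
      sum_eq_zero_iff_of_nonneg fun i _ => bathtub_term_nonneg hT hTc hs0 hs1 i] at hsum
    exact fun i => hsum i (mem_univ i)
  refine ⟨fun i hi => ?_, fun i hi => ?_⟩
  · have hiT : i ∈ T := by_contra fun h => (hTc i h).not_gt hi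
    rcases mul_eq_zero.1 (hzero i) with h | h
    · simp only [hiT, if_true] at h; linarith
    · linarith
  · have hiT : i ∉ T := fun h => (hT i h).not_gt hi
    rcases mul_eq_zero.1 (hzero i) with h | h
    · simp only [hiT, if_false] at h; linarith
    · linarith

end Bathtub

section Moments

variable {Ω n m : Type*} {mΩ : MeasurableSpace Ω} {μ : Measure Ω}

noncomputable def meanVec (X : Ω → n → ℝ) (μ : Measure Ω) : n → ℝ :=
  fun i => ∫ ω, X ω i ∂μ

noncomputable def covMatrix (X : Ω → n → ℝ) (μ : Measure Ω) : Matrix n n ℝ :=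
  of fun i j => cov[fun ω => X ω i, fun ω => X ω j; μ]

theorem covMatrix_eq_of_identDistrib {Ω' : Type*} {mΩ' : MeasurableSpace Ω'} {ν : Measure Ω'}
    {X : Ω → n → ℝ} {Y : Ω' → n → ℝ} (h : IdentDistrib X Y μ ν) :
    covMatrix X μ = covMatrix Y ν := by
  ext i j
  have hi := (measurable_pi_apply (X := fun _ : n => ℝ) i).aestronglyMeasurable (μ := μ.map X)
  have hj := (measurable_pi_apply (X := fun _ : n => ℝ) j).aestronglyMeasurable (μ := μ.map X)
  calc cov[fun ω => X ω i, fun ω => X ω j; μ]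
      = cov[fun x : n → ℝ => x i, fun x => x j; μ.map X] :=
        (covariance_map hi hj h.aemeasurable_fst).symm
    _ = cov[fun ω => Y ω i, fun ω => Y ω j; ν] := by
      rw [h.map_eq] at hi hj ⊢
      exact covariance_map hi hj h.aemeasurable_snd

theorem eq_covMatrix {X : Ω → n → ℝ} {ν : n → ℝ} {C : Matrix n n ℝ}
    (hν : ∀ i, ν i = ∫ ω, X ω i ∂μ)
    (hC : ∀ i j, C i j = ∫ ω, (X ω i - ν i) * (X ω j - ν j) ∂μ) : C = covMatrix X μ := by
  ext i j
  rw [hC, hν, hν]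
  rfl

variable [Fintype n] [Fintype m]

theorem memLp_two_apply_of_integrable_sum_sq {X : Ω → n → ℝ} (hX : AEMeasurable X μ)
    (h : Integrable (fun ω => ∑ i, X ω i ^ 2) μ) (i : n) : MemLp (fun ω => X ω i) 2 μ := by
  have hXi : AEStronglyMeasurable (fun ω => X ω i) μ :=
    ((measurable_pi_apply i).comp_aemeasurable hX).aestronglyMeasurable
  rw [memLp_two_iff_integrable_sq hXi]
  refine h.mono' (hXi.pow 2) (ae_of_all _ fun ω => ?_)
  rw [Real.norm_eq_abs, abs_of_nonneg (sq_nonneg _)]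
  exact single_le_sum (fun l _ => sq_nonneg (X ω l)) (mem_univ i)

theorem integral_sum_sq_transpose_mulVec (Z : Ω → n → ℝ)
    (hZ : ∀ i i', Integrable (fun ω => Z ω i * Z ω i') μ) (U : Matrix n m ℝ) :
    ∫ ω, ∑ j, (Uᵀ *ᵥ Z ω) j ^ 2 ∂μ = trace (Uᵀ * (of fun i i' => ∫ ω, Z ω i * Z ω i' ∂μ) * U) := by
  have hpt : ∀ z : n → ℝ, ∑ j, (Uᵀ *ᵥ z) j ^ 2 = ∑ j, ∑ i, ∑ i', U i j * U i' j * (z i * z i') := by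
    intro z
    simp only [mulVec, dotProduct, transpose_apply, sq, sum_mul_sum]
    exact sum_congr rfl fun j _ => sum_congr rfl fun i _ => sum_congr rfl fun i' _ => by ring
  simp only [hpt]
  rw [integral_finsetSum _ fun j _ => integrable_finsetSum _ fun i _ =>
    integrable_finsetSum _ fun i' _ => (hZ i i').const_mul _]
  simp only [trace, Matrix.diag, mul_apply, transpose_apply, of_apply, sum_mul]
  refine sum_congr rfl fun j _ => ?_
  rw [integral_finsetSum _ fun i _ => integrable_finsetSum _ fun i' _ => (hZ i i').const_mul _,
    sum_comm]
  refine sum_congr rfl fun i _ => ?_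
  rw [integral_finsetSum _ fun i' _ => (hZ i i').const_mul _]
  exact sum_congr rfl fun i' _ => by rw [integral_const_mul]; ring

variable [IsProbabilityMeasure μ]

theorem integral_sub_mul_sub_of_indepFun {X X' Y Y' : Ω → ℝ} (hX : MemLp X 2 μ)
    (hX' : MemLp X' 2 μ) (hY : MemLp Y 2 μ) (hY' : MemLp Y' 2 μ) (hXY' : IndepFun X Y' μ)
    (hYX' : IndepFun Y X' μ) :
    ∫ ω, (X ω - Y ω) * (X' ω - Y' ω) ∂μ =
      cov[X, X'; μ] + cov[Y, Y'; μ] + (μ[X] - μ[Y]) * (μ[X'] - μ[Y']) := by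
  have h := covariance_eq_sub (hX.sub hY) (hX'.sub hY')
  rw [covariance_sub_sub hX hY hX' hY', hXY'.covariance_eq_zero hX hY',
    hYX'.covariance_eq_zero hY hX'] at h
  simp only [Pi.sub_apply, Pi.mul_apply] at h
  rw [integral_sub (hX.integrable one_le_two) (hY.integrable one_le_two),
    integral_sub (hX'.integrable one_le_two) (hY'.integrable one_le_two)] at h
  linarith

theorem integral_sum_sq_transpose_mulVec_sub_of_indepFun {X Y : Ω → n → ℝ}
    (hX : ∀ i, MemLp (fun ω => X ω i) 2 μ) (hY : ∀ i, MemLp (fun ω => Y ω i) 2 μ)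
    (hXY : IndepFun X Y μ) (U : Matrix n m ℝ) :
    ∫ ω, ∑ j, (Uᵀ *ᵥ (X ω - Y ω)) j ^ 2 ∂μ =
      trace (Uᵀ * (covMatrix X μ + covMatrix Y μ +
        vecMulVec (meanVec X μ - meanVec Y μ) (meanVec X μ - meanVec Y μ)) * U) := by
  rw [integral_sum_sq_transpose_mulVec (fun ω => X ω - Y ω)
    fun i i' => ((hX i).sub (hY i)).integrable_mul ((hX i').sub (hY i'))]
  congr
  ext i i'
  exact integral_sub_mul_sub_of_indepFun (hX i) (hX i') (hY i) (hY i')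
    (hXY.comp (measurable_pi_apply i) (measurable_pi_apply i'))
    (hXY.symm.comp (measurable_pi_apply i) (measurable_pi_apply i'))

theorem integral_sub_integral_eq_trace {X₀ X₁ Y₀ Y₀' : Ω → n → ℝ}
    (hX₀ : ∀ i, MemLp (fun ω => X₀ ω i) 2 μ) (hX₁ : ∀ i, MemLp (fun ω => X₁ ω i) 2 μ)
    (hidY₀ : IdentDistrib Y₀ X₀ μ μ) (hidY₀' : IdentDistrib Y₀' X₀ μ μ)
    (hXY₀ : IndepFun X₁ Y₀ μ) (hXY₀' : IndepFun X₀ Y₀' μ) (U : Matrix n m ℝ) :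
    (∫ ω, ∑ j, (Uᵀ *ᵥ (X₁ ω - Y₀ ω)) j ^ 2 ∂μ) - ∫ ω, ∑ j, (Uᵀ *ᵥ (X₀ ω - Y₀' ω)) j ^ 2 ∂μ =
      trace (Uᵀ * (vecMulVec (meanVec X₁ μ - meanVec X₀ μ) (meanVec X₁ μ - meanVec X₀ μ) +
        covMatrix X₁ μ - covMatrix X₀ μ) * U) := by
  have hcopy : ∀ {Y : Ω → n → ℝ}, IdentDistrib Y X₀ μ μ →
      (∀ i, MemLp (fun ω => Y ω i) 2 μ) ∧ meanVec Y μ = meanVec X₀ μ := fun h =>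
    ⟨fun i => (h.comp (measurable_pi_apply i)).symm.memLp_snd (hX₀ i),
      funext fun i => (h.comp (measurable_pi_apply i)).integral_eq⟩
  obtain ⟨hY₀, hmY₀⟩ := hcopy hidY₀
  obtain ⟨hY₀', hmY₀'⟩ := hcopy hidY₀'
  rw [integral_sum_sq_transpose_mulVec_sub_of_indepFun hX₁ hY₀ hXY₀,
    integral_sum_sq_transpose_mulVec_sub_of_indepFun hX₀ hY₀' hXY₀', ← trace_sub,
    ← Matrix.sub_mul, ← Matrix.mul_sub, covMatrix_eq_of_identDistrib hidY₀,
    covMatrix_eq_of_identDistrib hidY₀']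
  rw [hmY₀, hmY₀', sub_self, zero_vecMulVec, add_zero]
  congr 3
  abel

end Moments

section Eigencolumns

variable {m n : Type*} [Fintype m] [Fintype n]

theorem mul_eq_mul_diagonal_of_mulVec_col [DecidableEq m] {M : Matrix n n ℝ} {W : Matrix n m ℝ}
    {lam : m → ℝ} (heig : ∀ j, M *ᵥ W.col j = lam j • W.col j) : M * W = W * diagonal lam := by
  ext i j
  rw [mul_diagonal, mul_comm]
  exact congrFun (heig j) i

theorem trace_transpose_mul_mul_of_mulVec_col [DecidableEq m] {M : Matrix n n ℝ}
    {W : Matrix n m ℝ} {lam : m → ℝ} (hW : Wᵀ * W = 1)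
    (heig : ∀ j, M *ᵥ W.col j = lam j • W.col j) : trace (Wᵀ * M * W) = ∑ j, lam j := by
  rw [Matrix.mul_assoc, mul_eq_mul_diagonal_of_mulVec_col heig, ← Matrix.mul_assoc, hW,
    Matrix.one_mul, trace_diagonal]

theorem mul_transpose_eq_of_col_mem_span [DecidableEq m] {U W : Matrix n m ℝ} (hU : Uᵀ * U = 1)
    (hW : Wᵀ * W = 1) (hWU : ∀ j, W.col j ∈ Submodule.span ℝ (Set.range U.col)) :
    U * Uᵀ = W * Wᵀ := by
  have hproj : U * Uᵀ * W = W := by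
    have hfix : ∀ j, (U * Uᵀ) *ᵥ W.col j = (fun _ => (1 : ℝ)) j • W.col j := fun j => by
      obtain ⟨x, hx⟩ := (range_mulVecLin U ▸ hWU j :)
      rw [one_smul, ← hx, mulVecLin_apply, mulVec_mulVec, Matrix.mul_assoc, hU, Matrix.mul_one]
    rw [mul_eq_mul_diagonal_of_mulVec_col hfix, diagonal_one, Matrix.mul_one]
  set R := Uᵀ * W
  have hR : R * Rᵀ = 1 := by
    rw [mul_eq_one_comm, transpose_mul, transpose_transpose, Matrix.mul_assoc,
      ← Matrix.mul_assoc U, hproj, hW]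
  calc U * Uᵀ = U * (R * Rᵀ) * Uᵀ := by rw [hR, Matrix.mul_one]
    _ = (U * Uᵀ * W) * (U * Uᵀ * W)ᵀ := by
      simp only [R, transpose_mul, transpose_transpose, Matrix.mul_assoc]
    _ = W * Wᵀ := by rw [hproj]

theorem trace_transpose_mul_mul_eq_sum_of_span_eq [DecidableEq m] {M : Matrix n n ℝ}
    {U W : Matrix n m ℝ} {lam : m → ℝ} (hU : Uᵀ * U = 1) (hW : Wᵀ * W = 1)
    (heig : ∀ j, M *ᵥ W.col j = lam j • W.col j)
    (hspan : Submodule.span ℝ (Set.range U.col) = Submodule.span ℝ (Set.range W.col)) :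
    trace (Uᵀ * M * U) = ∑ j, lam j := by
  rw [← trace_transpose_mul_mul_of_mulVec_col hW heig, trace_mul_cycle, trace_mul_cycle Wᵀ,
    mul_transpose_eq_of_col_mem_span hU hW fun j => hspan ▸ Submodule.subset_span ⟨j, rfl⟩]

theorem mulVec_col_eq_smul [DecidableEq n] {V : Matrix n n ℝ} (hV : Vᵀ * V = 1) (ev : n → ℝ)
    (i : n) : (V * diagonal ev * Vᵀ) *ᵥ V.col i = ev i • V.col i := by
  rw [← mulVec_single_one, mulVec_mulVec, Matrix.mul_assoc, hV, Matrix.mul_one, ← mulVec_mulVec,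
    diagonal_mulVec_single, mul_one]
  ext l
  simp [mulVec, dotProduct, Pi.single_apply, mul_comm]

theorem mulVec_eq_smul_of_forall_ne [DecidableEq n] {V : Matrix n n ℝ} (hV : V * Vᵀ = 1)
    {ev : n → ℝ} {c : ℝ} {x : n → ℝ} (hx : ∀ i, ev i ≠ c → (Vᵀ *ᵥ x) i = 0) :
    (V * diagonal ev * Vᵀ) *ᵥ x = c • x := by
  have hdiag : diagonal ev *ᵥ (Vᵀ *ᵥ x) = c • (Vᵀ *ᵥ x) := by
    ext i
    rw [mulVec_diagonal, Pi.smul_apply, smul_eq_mul]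
    by_cases h : ev i = c
    · rw [h]
    · rw [hx i h, mul_zero, mul_zero]
  rw [← mulVec_mulVec, ← mulVec_mulVec, hdiag, mulVec_smul, mulVec_mulVec, hV, one_mulVec]

end Eigencolumns

theorem transpose_mul_self_submatrix {m n : Type*} [Fintype n] [DecidableEq m] [DecidableEq n]
    {V : Matrix n n ℝ} (hV : Vᵀ * V = 1) {f : m → n} (hf : Function.Injective f) :
    (V.submatrix id f)ᵀ * V.submatrix id f = 1 := by
  rw [transpose_submatrix, ← submatrix_mul _ _ _ _ _ Function.bijective_id, hV, submatrix_one _ hf]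

section ProjectionWeights

variable {m n : Type*} [Fintype m] [Fintype n] {U : Matrix n m ℝ} {V : Matrix n n ℝ}

theorem dotProduct_transpose_mulVec_add_dotProduct_sub [DecidableEq m] (hU : Uᵀ * U = 1)
    (x : n → ℝ) :
    (Uᵀ *ᵥ x) ⬝ᵥ (Uᵀ *ᵥ x) + (x - U *ᵥ (Uᵀ *ᵥ x)) ⬝ᵥ (x - U *ᵥ (Uᵀ *ᵥ x)) = x ⬝ᵥ x := by
  set y := Uᵀ *ᵥ x
  have hxy : x ⬝ᵥ U *ᵥ y = y ⬝ᵥ y := by rw [dotProduct_mulVec, ← mulVec_transpose]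
  have hyy : (U *ᵥ y) ⬝ᵥ (U *ᵥ y) = y ⬝ᵥ y := by
    rw [dotProduct_mulVec, ← mulVec_transpose, mulVec_mulVec, hU, one_mulVec]
  simp only [sub_dotProduct, dotProduct_sub, hxy, hyy, dotProduct_comm (U *ᵥ y) x]
  ring

theorem trace_transpose_mul_diagonal_mul [DecidableEq n] (A : Matrix n m ℝ) (ev : n → ℝ) :
    trace (Aᵀ * diagonal ev * A) = ∑ i, ev i * (A i ⬝ᵥ A i) := by
  simp only [trace, Matrix.diag, mul_apply, transpose_apply, diagonal_apply, mul_ite, mul_zero,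
    sum_ite_eq', mem_univ, if_true, dotProduct, mul_sum]
  rw [sum_comm]
  simp only [mul_comm, mul_left_comm]

theorem trace_conj_eq_sum_mul_dotProduct [DecidableEq n] (U : Matrix n m ℝ) (V : Matrix n n ℝ)
    (ev : n → ℝ) :
    trace (Uᵀ * (V * diagonal ev * Vᵀ) * U) =
      ∑ i, ev i * ((Uᵀ *ᵥ V.col i) ⬝ᵥ (Uᵀ *ᵥ V.col i)) := by
  have hconj : Uᵀ * (V * diagonal ev * Vᵀ) * U = (Vᵀ * U)ᵀ * diagonal ev * (Vᵀ * U) := by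
    simp only [transpose_mul, transpose_transpose, Matrix.mul_assoc]
  rw [hconj, trace_transpose_mul_diagonal_mul]
  simp only [mulVec_transpose]
  rfl

theorem dotProduct_col_self_eq_one [DecidableEq n] (hV : Vᵀ * V = 1) (i : n) :
    V.col i ⬝ᵥ V.col i = 1 := by
  have h := congrFun (congrFun hV i) i
  rwa [mul_apply', one_apply_eq] at h

variable [DecidableEq m] [DecidableEq n]

theorem dotProduct_transpose_mulVec_col_le_one (hU : Uᵀ * U = 1) (hV : Vᵀ * V = 1) (i : n) :
    (Uᵀ *ᵥ V.col i) ⬝ᵥ (Uᵀ *ᵥ V.col i) ≤ 1 := by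
  have hbessel := dotProduct_transpose_mulVec_add_dotProduct_sub hU (V.col i)
  have hres : 0 ≤ (V.col i - U *ᵥ (Uᵀ *ᵥ V.col i)) ⬝ᵥ (V.col i - U *ᵥ (Uᵀ *ᵥ V.col i)) :=
    sum_nonneg fun l _ => mul_self_nonneg _
  rw [dotProduct_col_self_eq_one hV] at hbessel
  linarith

theorem col_mem_span_of_dotProduct_transpose_mulVec_eq_one (hU : Uᵀ * U = 1) (hV : Vᵀ * V = 1)
    {i : n} (h : (Uᵀ *ᵥ V.col i) ⬝ᵥ (Uᵀ *ᵥ V.col i) = 1) :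
    V.col i ∈ Submodule.span ℝ (Set.range U.col) := by
  have hbessel := dotProduct_transpose_mulVec_add_dotProduct_sub hU (V.col i)
  rw [dotProduct_col_self_eq_one hV, h, add_eq_left, dotProduct_self_eq_zero, sub_eq_zero]
    at hbessel
  rw [hbessel, ← range_mulVecLin]
  exact ⟨_, rfl⟩

theorem sum_dotProduct_transpose_mulVec_col (hU : Uᵀ * U = 1) (hV : V * Vᵀ = 1) :
    ∑ i, (Uᵀ *ᵥ V.col i) ⬝ᵥ (Uᵀ *ᵥ V.col i) = Fintype.card m := by
  have h := trace_conj_eq_sum_mul_dotProduct U V fun _ => 1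
  rw [diagonal_one, Matrix.mul_one, hV, Matrix.mul_one, hU, trace_one] at h
  simpa using h.symm

end ProjectionWeights

theorem dotProduct_eq_zero_of_mem_span {m n : Type*} [Fintype m] [Fintype n] {U : Matrix n m ℝ}
    {x y : n → ℝ} (hx : Uᵀ *ᵥ x = 0) (hy : y ∈ Submodule.span ℝ (Set.range U.col)) :
    x ⬝ᵥ y = 0 := by
  obtain ⟨z, rfl⟩ := (range_mulVecLin U ▸ hy :)
  rw [mulVecLin_apply, dotProduct_mulVec, ← mulVec_transpose, hx, zero_dotProduct]

section Extension

theorem _root_.Orthonormal.exists_orthonormal_span_eq_extend {E ι : Type*}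
    [NormedAddCommGroup E] [InnerProductSpace ℝ E] [Fintype ι] {u v : ι → E}
    (hu : Orthonormal ℝ u) (hv : Orthonormal ℝ v) {s : Set ι}
    (hs : ∀ j ∈ s, v j ∈ Submodule.span ℝ (Set.range u)) :
    ∃ w : ι → E, Orthonormal ℝ w ∧ Submodule.span ℝ (Set.range w) = Submodule.span ℝ (Set.range u) ∧
      ∀ j ∈ s, w j = v j := by
  set S := Submodule.span ℝ (Set.range u)
  have : FiniteDimensional ℝ S := FiniteDimensional.span_of_finite ℝ (Set.finite_range u)
  let v' : ι → S := fun j => S.orthogonalProjectionOnto (v j)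
  have hv' : ∀ j ∈ s, (v' j : E) = v j := fun j hj =>
    congrArg Subtype.val (S.orthogonalProjectionOnto_mem_subspace_eq_self ⟨v j, hs j hj⟩)
  have hv's : Orthonormal ℝ (s.domRestrict v') := by
    rw [← S.subtypeₗᵢ.orthonormal_comp_iff]
    convert hv.comp _ Subtype.val_injective using 1
    exact funext fun j => hv' j j.2
  obtain ⟨b, hb⟩ := hv's.exists_orthonormalBasis_extension_of_card_eq
    (finrank_span_eq_card hu.linearIndependent)
  refine ⟨fun j => b j, b.orthonormal.comp_linearIsometry S.subtypeₗᵢ, ?_,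
    fun j hj => (congrArg Subtype.val (hb j hj)).trans (hv' j hj)⟩
  rw [show (fun j => (b j : E)) = S.subtype ∘ b from rfl, Set.range_comp, ← Submodule.map_span,
    ← b.coe_toBasis, b.toBasis.span_eq, Submodule.map_subtype_top]

variable {m n : Type*} [Fintype n] [DecidableEq m]

theorem orthonormal_toLp_col_iff {W : Matrix n m ℝ} :
    Orthonormal ℝ (fun j => WithLp.toLp 2 (W.col j)) ↔ Wᵀ * W = 1 := by
  rw [orthonormal_iff_ite, ← Matrix.ext_iff]
  simp only [EuclideanSpace.inner_toLp_toLp, star_trivial, mul_apply', one_apply, dotProduct_comm]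
  rfl

variable [Fintype m]

theorem exists_transpose_mul_self_eq_one_col_eq {U V : Matrix n m ℝ} (hU : Uᵀ * U = 1)
    (hV : Vᵀ * V = 1) {s : Set m} (hs : ∀ j ∈ s, V.col j ∈ Submodule.span ℝ (Set.range U.col)) :
    ∃ W : Matrix n m ℝ, Wᵀ * W = 1 ∧
      Submodule.span ℝ (Set.range W.col) = Submodule.span ℝ (Set.range U.col) ∧
      ∀ j ∈ s, W.col j = V.col j := by
  let e := (WithLp.linearEquiv 2 ℝ (n → ℝ)).symm
  have hspan : ∀ A : Matrix n m ℝ, Submodule.span ℝ (Set.range fun j => WithLp.toLp 2 (A.col j)) =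
      (Submodule.span ℝ (Set.range A.col)).map e.toLinearMap := fun A => by
    rw [Submodule.map_span, ← Set.range_comp]
    rfl
  obtain ⟨w, hw, hwspan, hwv⟩ := (orthonormal_toLp_col_iff.2 hU).exists_orthonormal_span_eq_extend
    (orthonormal_toLp_col_iff.2 hV) (s := s) fun j hj => by
      rw [hspan]
      exact Submodule.mem_map_of_mem (hs j hj)
  refine ⟨of fun i j => w j i, orthonormal_toLp_col_iff.1 hw, ?_,
    fun j hj => congrArg WithLp.ofLp (hwv j hj)⟩
  apply Submodule.map_injective_of_injective e.injective
  rw [← hspan, ← hspan]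
  exact hwspan

end Extension

section TopEigenvalues

variable {d k : ℕ} (hkd : k ≤ d) {ev : Fin d → ℝ} {c : ℝ}
  {U : Matrix (Fin d) (Fin k) ℝ} {V : Matrix (Fin d) (Fin d) ℝ}

theorem sum_castLE_eq_sum_filter (f : Fin d → ℝ) :
    ∑ j, f (Fin.castLE hkd j) = ∑ i ∈ univ.filter fun i : Fin d => (i : ℕ) < k, f i := by
  refine (sum_map univ (Fin.castLEEmb hkd) f).symm.trans (sum_congr ?_ fun _ _ => rfl)
  ext i
  simp only [mem_map, Fin.castLEEmb_apply, mem_univ, true_and, mem_filter]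
  exact ⟨fun ⟨j, hj⟩ => hj ▸ j.isLt, fun hi => ⟨⟨i, hi⟩, rfl⟩⟩

theorem trace_conj_le_sum_castLE (hc_top : ∀ i : Fin d, (i : ℕ) < k → c ≤ ev i)
    (hc_bot : ∀ i : Fin d, k ≤ (i : ℕ) → ev i ≤ c) (hU : Uᵀ * U = 1) (hV : Vᵀ * V = 1) :
    trace (Uᵀ * (V * diagonal ev * Vᵀ) * U) ≤ ∑ j, ev (Fin.castLE hkd j) := by
  rw [trace_conj_eq_sum_mul_dotProduct, sum_castLE_eq_sum_filter]
  refine sum_mul_le_sum_of_le_one (fun i hi => hc_top i (mem_filter.1 hi).2)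
    (fun i hi => hc_bot i (by simpa using hi)) (fun i => sum_nonneg fun l _ => mul_self_nonneg _)
    (dotProduct_transpose_mulVec_col_le_one hU hV) ?_
  rw [sum_dotProduct_transpose_mulVec_col hU (mul_eq_one_comm.1 hV), Fintype.card_fin,
    Fin.card_filter_val_lt, min_eq_right hkd]

theorem col_mem_span_and_transpose_mulVec_col_eq_zero_of_trace_conj_eq
    (hc_top : ∀ i : Fin d, (i : ℕ) < k → c ≤ ev i) (hc_bot : ∀ i : Fin d, k ≤ (i : ℕ) → ev i ≤ c)
    (hU : Uᵀ * U = 1) (hV : Vᵀ * V = 1)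
    (heq : trace (Uᵀ * (V * diagonal ev * Vᵀ) * U) = ∑ j, ev (Fin.castLE hkd j)) :
    (∀ i, c < ev i → V.col i ∈ Submodule.span ℝ (Set.range U.col)) ∧
      ∀ i, ev i < c → Uᵀ *ᵥ V.col i = 0 := by
  rw [trace_conj_eq_sum_mul_dotProduct, sum_castLE_eq_sum_filter] at heq
  obtain ⟨hhigh, hlow⟩ := eq_one_and_eq_zero_of_sum_mul_eq
    (s := fun i => (Uᵀ *ᵥ V.col i) ⬝ᵥ (Uᵀ *ᵥ V.col i)) (fun i hi => hc_top i (mem_filter.1 hi).2)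
    (fun i hi => hc_bot i (by simpa using hi)) (fun i => sum_nonneg fun l _ => mul_self_nonneg _)
    (dotProduct_transpose_mulVec_col_le_one hU hV)
    (by rw [sum_dotProduct_transpose_mulVec_col hU (mul_eq_one_comm.1 hV), Fintype.card_fin,
      Fin.card_filter_val_lt, min_eq_right hkd]) heq
  exact ⟨fun i hi => col_mem_span_of_dotProduct_transpose_mulVec_eq_one hU hV (hhigh i hi),
    fun i hi => dotProduct_self_eq_zero.1 (hlow i hi)⟩

/-- Completing the eigenvectors with eigenvalue above `c` to an orthonormal basis of the column
span of `U`, the added vectors are orthogonal to every eigenvector with eigenvalue `≠ c`, so they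
lie in the `c`-eigenspace. -/
theorem exists_top_eigencols_span_eq (hc_top : ∀ i : Fin d, (i : ℕ) < k → c ≤ ev i)
    (hc_bot : ∀ i : Fin d, k ≤ (i : ℕ) → ev i ≤ c) (hU : Uᵀ * U = 1) (hV : Vᵀ * V = 1)
    (hhigh : ∀ i, c < ev i → V.col i ∈ Submodule.span ℝ (Set.range U.col))
    (hlow : ∀ i, ev i < c → Uᵀ *ᵥ V.col i = 0) :
    ∃ W : Matrix (Fin d) (Fin k) ℝ, Wᵀ * W = 1 ∧
      (∀ j, (V * diagonal ev * Vᵀ) *ᵥ W.col j = ev (Fin.castLE hkd j) • W.col j) ∧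
      Submodule.span ℝ (Set.range U.col) = Submodule.span ℝ (Set.range W.col) := by
  obtain ⟨W, hW, hspan, hcol⟩ := exists_transpose_mul_self_eq_one_col_eq hU
    (transpose_mul_self_submatrix hV (Fin.castLE_injective hkd))
    (s := {j | c < ev (Fin.castLE hkd j)}) fun j hj => hhigh _ hj
  refine ⟨W, hW, fun j => ?_, hspan.symm⟩
  by_cases hj : c < ev (Fin.castLE hkd j)
  · rw [hcol j hj]
    exact mulVec_col_eq_smul hV ev _
  rw [le_antisymm (not_lt.1 hj) (hc_top _ j.isLt)]
  refine mulVec_eq_smul_of_forall_ne (mul_eq_one_comm.1 hV) fun i hi => ?_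
  change V.col i ⬝ᵥ W.col j = 0
  rcases hi.lt_or_gt with hlt | hgt
  · exact dotProduct_eq_zero_of_mem_span (hlow i hlt) (hspan ▸ Submodule.subset_span ⟨j, rfl⟩)
  · have hik : (i : ℕ) < k := not_le.1 fun h => (hc_bot i h).not_gt hgt
    have hWij := congrFun (congrFun hW ⟨i, hik⟩) j
    rw [mul_apply', one_apply_ne fun h => hj (by subst h; exact hgt)] at hWij
    rw [show V.col i = W.col ⟨i, hik⟩ from (hcol ⟨i, hik⟩ hgt).symm]
    exact hWij

end TopEigenvalues

end ContrastivePCA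

open ContrastivePCA

theorem contrastive_transport_projection_optimality_general
    {d k : ℕ} (hk : 1 ≤ k) (hkd : k ≤ d)
    {Ω : Type*} [MeasureSpace Ω] [IsProbabilityMeasure (ℙ : Measure Ω)]
    (X₀ X₁ Y₀ Y₀' : Ω → (Fin d → ℝ))
    (hX₁ : Measurable X₁)
    (hidY₀ : IdentDistrib Y₀ X₀ ℙ ℙ) (hidY₀' : IdentDistrib Y₀' X₀ ℙ ℙ)
    (hXY₀ : IndepFun (fun ω => (X₀ ω, X₁ ω)) Y₀ ℙ)
    (hXY₀' : IndepFun (fun ω => (X₀ ω, X₁ ω)) Y₀' ℙ)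
    (hX₀2 : Integrable (fun ω => ∑ i, (X₀ ω i) ^ 2) ℙ)
    (hX₁2 : Integrable (fun ω => ∑ i, (X₁ ω i) ^ 2) ℙ)
    (μ₀ μ₁ : Fin d → ℝ)
    (hμ₀ : ∀ i, μ₀ i = ∫ ω, X₀ ω i) (hμ₁ : ∀ i, μ₁ i = ∫ ω, X₁ ω i)
    (C₀ C₁ : Matrix (Fin d) (Fin d) ℝ)
    (hC₀ : ∀ i j, C₀ i j = ∫ ω, (X₀ ω i - μ₀ i) * (X₀ ω j - μ₀ j))
    (hC₁ : ∀ i j, C₁ i j = ∫ ω, (X₁ ω i - μ₁ i) * (X₁ ω j - μ₁ j))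
    (Γ : Matrix (Fin d) (Fin k) ℝ → ℝ)
    (hΓ : ∀ U : Matrix (Fin d) (Fin k) ℝ,
        Γ U = (∫ ω, ∑ j, ((Uᵀ *ᵥ (X₁ ω - Y₀ ω)) j) ^ 2)
              - (∫ ω, ∑ j, ((Uᵀ *ᵥ (X₀ ω - Y₀' ω)) j) ^ 2))
    (M : Matrix (Fin d) (Fin d) ℝ)
    (hM : M = vecMulVec (μ₁ - μ₀) (μ₁ - μ₀) + C₁ - C₀)
    (ev : Fin d → ℝ) (hev : Antitone ev)
    (V : Matrix (Fin d) (Fin d) ℝ) (hV : Vᵀ * V = 1)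
    (hdecomp : M = V * Matrix.diagonal ev * Vᵀ) :
    IsGreatest {r : ℝ | ∃ U : Matrix (Fin d) (Fin k) ℝ, Uᵀ * U = 1 ∧ r = Γ U}
      (∑ j : Fin k, ev (Fin.castLE hkd j))
    ∧ ∀ U : Matrix (Fin d) (Fin k) ℝ, Uᵀ * U = 1 →
        (Γ U = ∑ j : Fin k, ev (Fin.castLE hkd j)
          ↔ ∃ W : Matrix (Fin d) (Fin k) ℝ, Wᵀ * W = 1
              ∧ (∀ j : Fin k, M *ᵥ (fun i => W i j)
                    = ev (Fin.castLE hkd j) • (fun i => W i j))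
              ∧ Submodule.span ℝ (Set.range fun j : Fin k => (fun i => U i j))
                  = Submodule.span ℝ (Set.range fun j : Fin k => (fun i => W i j))) := by
  obtain rfl : C₀ = covMatrix X₀ ℙ := eq_covMatrix hμ₀ hC₀
  obtain rfl : C₁ = covMatrix X₁ ℙ := eq_covMatrix hμ₁ hC₁
  obtain rfl : μ₀ = meanVec X₀ ℙ := funext hμ₀
  obtain rfl : μ₁ = meanVec X₁ ℙ := funext hμ₁
  have hΓM : ∀ U, Γ U = trace (Uᵀ * M * U) := fun U => by
    rw [hΓ, hM, integral_sub_integral_eq_trace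
      (memLp_two_apply_of_integrable_sum_sq hidY₀.aemeasurable_snd hX₀2)
      (memLp_two_apply_of_integrable_sum_sq hX₁.aemeasurable hX₁2) hidY₀ hidY₀'
      (hXY₀.comp measurable_snd measurable_id) (hXY₀'.comp measurable_fst measurable_id)]
  subst hdecomp
  simp only [hΓM]
  have hc_top : ∀ i : Fin d, (i : ℕ) < k → ev ⟨k - 1, by omega⟩ ≤ ev i :=
    fun i hi => hev (Fin.le_def.2 (show (i : ℕ) ≤ k - 1 by omega))
  have hc_bot : ∀ i : Fin d, k ≤ (i : ℕ) → ev i ≤ ev ⟨k - 1, by omega⟩ :=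
    fun i hi => hev (Fin.le_def.2 (show k - 1 ≤ (i : ℕ) by omega))
  have hV₀ := transpose_mul_self_submatrix hV (Fin.castLE_injective hkd)
  refine ⟨⟨⟨_, hV₀, (trace_transpose_mul_mul_of_mulVec_col hV₀ fun j =>
      mulVec_col_eq_smul hV ev (Fin.castLE hkd j)).symm⟩, ?_⟩,
    fun U hU => ⟨fun heq => ?_, ?_⟩⟩
  · rintro r ⟨U, hU, rfl⟩
    exact trace_conj_le_sum_castLE hkd hc_top hc_bot hU hV
  · obtain ⟨hhigh, hlow⟩ :=
      col_mem_span_and_transpose_mulVec_col_eq_zero_of_trace_conj_eq hkd hc_top hc_bot hU hV heq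
    exact exists_top_eigencols_span_eq hkd hc_top hc_bot hU hV hhigh hlow
  · rintro ⟨W, hW, heig, hspan⟩
    exact trace_transpose_mul_mul_eq_sum_of_span_eq hU hW heig hspan

/-- contrastive transport projection: full theorem.  Let `X₀ ∼ P₀`,
`X₁ ∼ P₁` have means `μ₀, μ₁` and covariances `C₀, C₁`, let `Y₀, Y₀′ ∼ P₀` be
independent copies also independent of `(X₀, X₁)`, and for semi-orthogonal
`U ∈ ℝ^{d×k}` set `Γ(U) = E[‖Uᵀ(X₁−Y₀)‖₂²] − E[‖Uᵀ(X₀−Y₀′)‖₂²]`.  Let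
`M = (μ₁−μ₀)(μ₁−μ₀)ᵀ + C₁ − C₀` have eigenvalues `ev 0 ≥ ⋯ ≥ ev (d−1)` (witnessed by
an orthogonal eigendecomposition).  Then the maximum of `Γ(U)` over semi-orthogonal `U`
equals `λ₁(M) + ⋯ + λ_k(M)` (and is attained), and for semi-orthogonal `U` the maximum
is attained exactly when the column space of `U` is a top-`k` eigenspace of `M`, i.e.
when it coincides with the span of some `k` orthonormal eigenvectors of `M` for the `k`
largest eigenvalues. -/
theorem contrastive_transport_projection_optimality
    {d k : ℕ} (hk : 1 ≤ k) (hkd : k ≤ d)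
    {Ω : Type*} [MeasureSpace Ω] [IsProbabilityMeasure (ℙ : Measure Ω)]
    (X₀ X₁ Y₀ Y₀' : Ω → (Fin d → ℝ))
    (hX₀ : Measurable X₀) (hX₁ : Measurable X₁)
    (hY₀ : Measurable Y₀) (hY₀' : Measurable Y₀')
    (hidY₀ : IdentDistrib Y₀ X₀ ℙ ℙ) (hidY₀' : IdentDistrib Y₀' X₀ ℙ ℙ)
    (hYY : IndepFun Y₀ Y₀' ℙ)
    (hXY₀ : IndepFun (fun ω => (X₀ ω, X₁ ω)) Y₀ ℙ)
    (hXY₀' : IndepFun (fun ω => (X₀ ω, X₁ ω)) Y₀' ℙ)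
    (hX₀2 : Integrable (fun ω => ∑ i, (X₀ ω i) ^ 2) ℙ)
    (hX₁2 : Integrable (fun ω => ∑ i, (X₁ ω i) ^ 2) ℙ)
    (μ₀ μ₁ : Fin d → ℝ)
    (hμ₀ : ∀ i, μ₀ i = ∫ ω, X₀ ω i) (hμ₁ : ∀ i, μ₁ i = ∫ ω, X₁ ω i)
    (C₀ C₁ : Matrix (Fin d) (Fin d) ℝ)
    (hC₀ : ∀ i j, C₀ i j = ∫ ω, (X₀ ω i - μ₀ i) * (X₀ ω j - μ₀ j))
    (hC₁ : ∀ i j, C₁ i j = ∫ ω, (X₁ ω i - μ₁ i) * (X₁ ω j - μ₁ j))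
    (Γ : Matrix (Fin d) (Fin k) ℝ → ℝ)
    (hΓ : ∀ U : Matrix (Fin d) (Fin k) ℝ,
        Γ U = (∫ ω, ∑ j, ((Uᵀ *ᵥ (X₁ ω - Y₀ ω)) j) ^ 2)
              - (∫ ω, ∑ j, ((Uᵀ *ᵥ (X₀ ω - Y₀' ω)) j) ^ 2))
    (M : Matrix (Fin d) (Fin d) ℝ)
    (hM : M = vecMulVec (μ₁ - μ₀) (μ₁ - μ₀) + C₁ - C₀)
    (ev : Fin d → ℝ) (hev : Antitone ev)
    (V : Matrix (Fin d) (Fin d) ℝ) (hV : Vᵀ * V = 1)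
    (hdecomp : M = V * Matrix.diagonal ev * Vᵀ) :
    IsGreatest {r : ℝ | ∃ U : Matrix (Fin d) (Fin k) ℝ, Uᵀ * U = 1 ∧ r = Γ U}
      (∑ j : Fin k, ev (Fin.castLE hkd j))
    ∧ ∀ U : Matrix (Fin d) (Fin k) ℝ, Uᵀ * U = 1 →
        (Γ U = ∑ j : Fin k, ev (Fin.castLE hkd j)
          ↔ ∃ W : Matrix (Fin d) (Fin k) ℝ, Wᵀ * W = 1
              ∧ (∀ j : Fin k, M *ᵥ (fun i => W i j)
                    = ev (Fin.castLE hkd j) • (fun i => W i j))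
              ∧ Submodule.span ℝ (Set.range fun j : Fin k => (fun i => U i j))
                  = Submodule.span ℝ (Set.range fun j : Fin k => (fun i => W i j))) :=
  contrastive_transport_projection_optimality_general hk hkd X₀ X₁ Y₀ Y₀' hX₁ hidY₀ hidY₀' hXY₀
    hXY₀' hX₀2 hX₁2 μ₀ μ₁ hμ₀ hμ₁ C₀ C₁ hC₀ hC₁ Γ hΓ M hM ev hev V hV hdecomp
end
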